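/- arXiv:1901.09574 — 5 statements merged into one kernel-verified Lean document; each statement's English description precedes it below -/
import Mathlib

section
/- Fix r ∈ ℚ^n and let M_r = {(v,i) ∈ ℚ × ℕ^n : v ≥ 0 and v + r·i ∈ ℤ}, an additive submonoid of ℚ × ℕ^n. Let I ⊆ M_r be an ideal of the monoid M_r, i.e., I + M_r ⊆ I. Then there exists a unique subset S ⊆ I such that (1) I = S + M_r, and (2) every subset T ⊆ I with I = T + M_r contains S. Moreover, S is finite; it is the set of minimal elements of I for the order x ≤ y iff y − x ∈ M_r. -/
/-!
The order `x ≤ y ↔ y - x ∈ M_r` is the componentwise order of `ℚ × ℕⁿ` restricted to `M_r`,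
since the integrality condition `v + r·i ∈ ℤ` passes to differences. If `d` is a common
denominator of the `r j`, the first coordinates of elements of `M_r` lie in `(1/d)ℕ`, so by
Dickson's lemma `M_r`, and hence `I`, is partially well ordered. Then every element of `I` lies
above a minimal one, which makes the minimal elements generate `I`; each of them must belong to
any generating set, and they form an antichain, hence a finite set.
-/

/-- The monoid `M_r = {(v, i) ∈ ℚ × ℕ^n : v ≥ 0 and v + r·i ∈ ℤ}`. -/
def Mr {n : ℕ} (r : Fin n → ℚ) : Set (ℚ × (Fin n → ℕ)) :=
  {p | 0 ≤ p.1 ∧ ∃ m : ℤ, p.1 + ∑ j, r j * (p.2 j : ℚ) = (m : ℚ)}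

open scoped Pointwise

theorem Set.IsPWO.finite_setOf_minimal {α : Type*} [PartialOrder α] {s : Set α} (h : s.IsPWO) :
    {x | Minimal (· ∈ s) x}.Finite :=
  (setOfPred_minimal_antichain (· ∈ s)).finite_of_partiallyWellOrderedOn
    (h.mono fun _ hx ↦ hx.prop)

theorem Set.eq_add_iff_forall_mem_iff {α : Type*} [Add α] {I T M : Set α} :
    I = T + M ↔ ∀ x, x ∈ I ↔ ∃ s ∈ T, ∃ t ∈ M, x = s + t := by
  simp only [Set.ext_iff, Set.mem_add, eq_comm]

theorem Rat.exists_intCast_eq_mul_of_den_dvd {q : ℚ} {d : ℕ} (h : q.den ∣ d) :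
    ∃ z : ℤ, (d : ℚ) * q = z := by
  obtain ⟨k, rfl⟩ := h
  exact ⟨k * q.num, by push_cast; rw [mul_comm (q.den : ℚ), mul_assoc, Rat.den_mul_eq_num]⟩

section MonoidIdeal

variable {α : Type*} [AddCommMonoid α] [PartialOrder α] {M I T : Set α}

theorem eq_setOf_minimal_add (hle : ∀ x ∈ M, ∀ y ∈ M, x ≤ y → ∃ t ∈ M, y = x + t)
    (hI : I.IsPWO) (hIM : I ⊆ M) (hIadd : ∀ x ∈ I, ∀ a ∈ M, x + a ∈ I) :
    I = {x | Minimal (· ∈ I) x} + M := by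
  refine Set.Subset.antisymm (fun x hx ↦ ?_) ?_
  · obtain ⟨s, hsx, hs⟩ := hI.exists_le_minimal hx
    obtain ⟨t, ht, rfl⟩ := hle s (hIM hs.prop) x (hIM hx) hsx
    exact Set.add_mem_add hs ht
  · rintro _ ⟨s, hs, t, ht, rfl⟩
    exact hIadd s hs.prop t ht

variable [IsOrderedAddMonoid α]

theorem setOf_minimal_subset_of_eq_add (hM : ∀ t ∈ M, 0 ≤ t) (hTI : T ⊆ I) (hT : I = T + M) :
    {x | Minimal (· ∈ I) x} ⊆ T := by
  intro x hx
  obtain ⟨s, hs, t, ht, rfl⟩ : x ∈ T + M := hT ▸ hx.prop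
  rwa [hx.eq_of_le (hTI hs) (le_add_of_nonneg_right (hM t ht))] at hs

theorem setOf_minimal_eq (hle : ∀ x ∈ M, ∀ y ∈ M, x ≤ y → ∃ t ∈ M, y = x + t)
    (hM : ∀ t ∈ M, 0 ≤ t) (hIM : I ⊆ M) :
    {x | Minimal (· ∈ I) x} = {x | x ∈ I ∧ ∀ y ∈ I, (∃ t ∈ M, x = y + t) → x = y} := by
  ext x
  refine ⟨fun hx ↦ ⟨hx.prop, fun y hy ⟨t, ht, hxy⟩ ↦ ?_⟩, fun ⟨hx, hmin⟩ ↦ ?_⟩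
  · exact (hx.eq_of_le hy (hxy ▸ le_add_of_nonneg_right (hM t ht))).symm
  · exact minimal_iff.2 ⟨hx, fun y hy hyx ↦ hmin y hy (hle y (hIM hy) x (hIM hx) hyx)⟩

end MonoidIdeal

namespace Mr

variable {n : ℕ} (r : Fin n → ℚ)

/-- On `(val a - r·i, i)` this gives back `val a`. -/
def totalVal (p : ℚ × (Fin n → ℕ)) : ℚ := p.1 + ∑ j, r j * (p.2 j : ℚ)

theorem totalVal_add (p q : ℚ × (Fin n → ℕ)) :
    totalVal r (p + q) = totalVal r p + totalVal r q := by
  simp only [totalVal, Prod.fst_add, Prod.snd_add, Pi.add_apply, Nat.cast_add, mul_add,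
    Finset.sum_add_distrib]
  ring

theorem nonneg_of_mem {t : ℚ × (Fin n → ℕ)} (ht : t ∈ Mr r) : 0 ≤ t :=
  ⟨ht.1, fun _ ↦ Nat.zero_le _⟩

theorem exists_add_of_le {x y : ℚ × (Fin n → ℕ)} (hx : x ∈ Mr r) (hy : y ∈ Mr r)
    (hxy : x ≤ y) : ∃ t ∈ Mr r, y = x + t := by
  obtain ⟨-, mx, hmx⟩ := hx
  obtain ⟨-, my, hmy⟩ := hy
  have hsum : x + (y - x) = y := add_tsub_cancel_of_le hxy
  refine ⟨y - x, ⟨sub_nonneg.2 hxy.1, my - mx, ?_⟩, hsum.symm⟩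
  change totalVal r x = mx at hmx
  change totalVal r y = my at hmy
  change totalVal r (y - x) = _
  have := totalVal_add r x (y - x)
  rw [hsum] at this
  push_cast
  linarith

theorem exists_fst_eq_div_of_mem : ∃ d : ℕ, 0 < d ∧ ∀ x ∈ Mr r, ∃ k : ℕ, x.1 = k / d := by
  refine ⟨∏ j, (r j).den, Finset.prod_pos fun j _ ↦ (r j).pos, fun x ⟨hx0, m, hm⟩ ↦ ?_⟩
  set d := ∏ j, (r j).den
  choose z hz using fun j ↦ Rat.exists_intCast_eq_mul_of_den_dvd
    (Finset.dvd_prod_of_mem (fun j ↦ (r j).den) (Finset.mem_univ j))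
  have hd : (0 : ℚ) < d := by positivity
  have hdx : (d : ℚ) * x.1 = ((d * m - ∑ j, z j * x.2 j : ℤ) : ℚ) := by
    push_cast
    simp only [← hz, mul_assoc, ← Finset.mul_sum, ← hm]
    ring
  lift d * m - ∑ j, z j * x.2 j to ℕ with k hk
  · exact_mod_cast hdx ▸ mul_nonneg hd.le hx0
  refine ⟨k, ?_⟩
  rw [eq_div_iff hd.ne', mul_comm, hdx]
  norm_cast

theorem isPWO : (Mr r).IsPWO := by
  obtain ⟨d, -, hd⟩ := exists_fst_eq_div_of_mem r
  have hmono : Monotone fun p : ℕ × (Fin n → ℕ) ↦ ((p.1 : ℚ) / d, p.2) :=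
    fun p q hpq ↦ ⟨div_le_div_of_nonneg_right (Nat.cast_le.2 hpq.1) d.cast_nonneg, hpq.2⟩
  refine ((Set.isPWO_of_wellQuasiOrderedLE Set.univ).image_of_monotone hmono).mono ?_
  intro x hx
  obtain ⟨k, hk⟩ := hd x hx
  exact ⟨(k, x.2), trivial, Prod.ext hk.symm rfl⟩

end Mr

/-- every ideal `I` of the monoid `M_r` has a unique minimal generating
set `S`; moreover `S` is finite and is the set of minimal elements of `I` for the
order `x ≤ y iff y - x ∈ M_r`. -/
theorem statement3 {n : ℕ} (r : Fin n → ℚ) (I : Set (ℚ × (Fin n → ℕ)))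
    (hIM : I ⊆ Mr r) (hI : ∀ x ∈ I, ∀ a ∈ Mr r, x + a ∈ I) :
    ∃ S : Set (ℚ × (Fin n → ℕ)),
      (S ⊆ I ∧ (∀ x, x ∈ I ↔ ∃ s ∈ S, ∃ t ∈ Mr r, x = s + t) ∧
        (∀ T ⊆ I, (∀ x, x ∈ I ↔ ∃ s ∈ T, ∃ t ∈ Mr r, x = s + t) → S ⊆ T)) ∧
      (∀ S' : Set (ℚ × (Fin n → ℕ)),
        (S' ⊆ I ∧ (∀ x, x ∈ I ↔ ∃ s ∈ S', ∃ t ∈ Mr r, x = s + t) ∧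
          (∀ T ⊆ I, (∀ x, x ∈ I ↔ ∃ s ∈ T, ∃ t ∈ Mr r, x = s + t) → S' ⊆ T)) →
        S' = S) ∧
      S.Finite ∧
      S = {x | x ∈ I ∧ ∀ y ∈ I, (∃ t ∈ Mr r, x = y + t) → x = y} := by
  have hle : ∀ x ∈ Mr r, ∀ y ∈ Mr r, x ≤ y → ∃ t ∈ Mr r, y = x + t :=
    fun _ hx _ hy ↦ Mr.exists_add_of_le r hx hy
  have hpos : ∀ t ∈ Mr r, 0 ≤ t := fun _ ↦ Mr.nonneg_of_mem r
  have hIpwo : I.IsPWO := (Mr.isPWO r).mono hIM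
  simp only [← Set.eq_add_iff_forall_mem_iff]
  rw [← setOf_minimal_eq hle hpos hIM]
  have hgen := eq_setOf_minimal_add hle hIpwo hIM hI
  have hleast : ∀ T ⊆ I, I = T + Mr r → {x | Minimal (· ∈ I) x} ⊆ T :=
    fun _ hTI hT ↦ setOf_minimal_subset_of_eq_add hpos hTI hT
  refine ⟨_, ⟨fun _ hx ↦ hx.prop, hgen, hleast⟩, ?_, hIpwo.finite_setOf_minimal, rfl⟩
  rintro S' ⟨hS'I, hS'gen, hS'least⟩
  exact (hS'least _ (fun _ hx ↦ hx.prop) hgen).antisymm (hleast S' hS'I hS'gen)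
end

section
/- Fix a monomial order ≤ω on ℕ^n. For every nonzero f = Σ_{i∈ℕ^n} a_i X^i in K{X;r}, there exists a unique exponent i₀ with a_{i₀} ≠ 0 such that for every i ≠ i₀ with a_i ≠ 0 one has a_i X^i < a_{i₀} X^{i₀}, i.e., either val(a_i) − r·i > val(a_{i₀}) − r·i₀, or these valuations are equal and i <ω i₀. (Thus every nonzero Tate series has a well-defined leading term LT(f) = a_{i₀}X^{i₀}.) -/
open MvPowerSeries

noncomputable section

/-- A normalized discrete valuation on a field `K`, complete with respect to
the associated distance. -/
structure IsCDVField {K : Type*} [Field K] (val : K → WithTop ℤ) : Prop where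
  eq_top_iff : ∀ x : K, val x = ⊤ ↔ x = 0
  map_one : val 1 = 0
  map_mul : ∀ x y : K, val (x * y) = val x + val y
  min_le_val_add : ∀ x y : K, min (val x) (val y) ≤ val (x + y)
  surjective : ∀ m : ℤ, ∃ x : K, val x = (m : WithTop ℤ)
  complete : ∀ u : ℕ → K,
      (∀ M : ℤ, ∃ N : ℕ, ∀ p, N ≤ p → ∀ q, N ≤ q → (M : WithTop ℤ) ≤ val (u p - u q)) →
      ∃ l : K, ∀ M : ℤ, ∃ N : ℕ, ∀ p, N ≤ p → (M : WithTop ℤ) ≤ val (u p - l)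

/-- A monomial order: a well-order compatible with addition. -/
structure IsMonomialOrder {M : Type*} [AddCommMonoid M] (mo : M → M → Prop) : Prop where
  refl : ∀ i, mo i i
  trans : ∀ i j k, mo i j → mo j k → mo i k
  antisymm : ∀ i j, mo i j → mo j i → i = j
  total : ∀ i j, mo i j ∨ mo j i
  add_right : ∀ i j k, mo i j → mo (i + k) (j + k)
  wf : WellFounded fun i j => mo i j ∧ i ≠ j

variable {K : Type*} [Field K] {n : ℕ}

/-- The valuation of `K`, with values in `WithTop ℚ`. -/
def valQ (val : K → WithTop ℤ) (a : K) : WithTop ℚ :=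
  WithTop.map (fun m : ℤ => (m : ℚ)) (val a)

/-- The dot product `r·i`. -/
def wt (r : Fin n → ℚ) (i : Fin n →₀ ℕ) : ℚ :=
  ∑ j, r j * (i j : ℚ)

/-- `val_r` of the term `a·X^i`, namely `val a - r·i`. -/
def tval (val : K → WithTop ℤ) (r : Fin n → ℚ) (a : K) (i : Fin n →₀ ℕ) : WithTop ℚ :=
  valQ val a + ((-wt r i : ℚ) : WithTop ℚ)

/-- `val_r` of the coefficient term of `f` at exponent `i`. -/
def cval (val : K → WithTop ℤ) (r : Fin n → ℚ) (f : MvPowerSeries (Fin n) K)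
    (i : Fin n →₀ ℕ) : WithTop ℚ :=
  tval val r (MvPowerSeries.coeff i f) i

/-- Membership in the Tate algebra `K{X; r}`: the coefficient valuations
`val(a_i) - r·i` tend to `+∞`, i.e. for each `C` only finitely many of them are `< C`. -/
def IsTate (val : K → WithTop ℤ) (r : Fin n → ℚ) (f : MvPowerSeries (Fin n) K) : Prop :=
  ∀ C : ℚ, {i : Fin n →₀ ℕ | cval val r f i < (C : WithTop ℚ)}.Finite

/-- The Tate algebra `K{X; r}`, as a subset of the ring of power series. -/
def TateSet (val : K → WithTop ℤ) (r : Fin n → ℚ) : Set (MvPowerSeries (Fin n) K) :=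
  {f | IsTate val r f}

/-- The integral Tate algebra `K{X; r}°` (Tate series of nonnegative Gauss valuation). -/
def TateIntSet (val : K → WithTop ℤ) (r : Fin n → ℚ) : Set (MvPowerSeries (Fin n) K) :=
  {f | IsTate val r f ∧ ∀ i, (0 : WithTop ℚ) ≤ cval val r f i}

/-- The Gauss valuation of `f` equals `v`. -/
def GaussValEq (val : K → WithTop ℤ) (r : Fin n → ℚ) (f : MvPowerSeries (Fin n) K)
    (v : ℚ) : Prop :=
  (∀ i, (v : WithTop ℚ) ≤ cval val r f i) ∧ ∃ i, cval val r f i = (v : WithTop ℚ)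

/-- `J` is an ideal of the subring `A` of the power series ring. -/
structure IsIdealOf (A J : Set (MvPowerSeries (Fin n) K)) : Prop where
  subset : J ⊆ A
  zero_mem : (0 : MvPowerSeries (Fin n) K) ∈ J
  add_mem : ∀ f ∈ J, ∀ g ∈ J, f + g ∈ J
  neg_mem : ∀ f ∈ J, -f ∈ J
  smul_mem : ∀ a ∈ A, ∀ f ∈ J, a * f ∈ J

/-- `a·X^i < b·X^j` for the term order attached to `val`, `r` and the monomial order `mo`. -/
def TermLt (val : K → WithTop ℤ) (r : Fin n → ℚ) (mo : (Fin n →₀ ℕ) → (Fin n →₀ ℕ) → Prop)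
    (a : K) (i : Fin n →₀ ℕ) (b : K) (j : Fin n →₀ ℕ) : Prop :=
  tval val r b j < tval val r a i ∨ (tval val r a i = tval val r b j ∧ i ≠ j ∧ mo i j)

/-- `a·X^i ≤ b·X^j` for the term order. -/
def TermLe (val : K → WithTop ℤ) (r : Fin n → ℚ) (mo : (Fin n →₀ ℕ) → (Fin n →₀ ℕ) → Prop)
    (a : K) (i : Fin n →₀ ℕ) (b : K) (j : Fin n →₀ ℕ) : Prop :=
  tval val r b j < tval val r a i ∨ (tval val r a i = tval val r b j ∧ mo i j)

/-- `a·X^i` is the leading term of `f`. -/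
def IsLeadingTerm (val : K → WithTop ℤ) (r : Fin n → ℚ)
    (mo : (Fin n →₀ ℕ) → (Fin n →₀ ℕ) → Prop)
    (f : MvPowerSeries (Fin n) K) (a : K) (i : Fin n →₀ ℕ) : Prop :=
  MvPowerSeries.coeff i f = a ∧ a ≠ 0 ∧
    ∀ j, MvPowerSeries.coeff j f ≠ 0 → j ≠ i →
      TermLt val r mo (MvPowerSeries.coeff j f) j a i

/-- `a·X^i` divides `b·X^j` in the monoid of terms `T(r)`. -/
def TDiv (a : K) (i : Fin n →₀ ℕ) (b : K) (j : Fin n →₀ ℕ) : Prop :=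
  a ≠ 0 ∧ b ≠ 0 ∧ ∃ k, j = i + k

/-- `a·X^i` divides `b·X^j` in the monoid of integral terms `T°(r)`. -/
def TIntDiv (val : K → WithTop ℤ) (r : Fin n → ℚ) (a : K) (i : Fin n →₀ ℕ)
    (b : K) (j : Fin n →₀ ℕ) : Prop :=
  a ≠ 0 ∧ b ≠ 0 ∧ ∃ k, j = i + k ∧ (0 : WithTop ℚ) ≤ tval val r (b * a⁻¹) k

/-- `g` is a Gröbner basis of `J`, as an ideal of `K{X;r}`. -/
def IsGB (val : K → WithTop ℤ) (r : Fin n → ℚ) (mo : (Fin n →₀ ℕ) → (Fin n →₀ ℕ) → Prop)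
    (J : Set (MvPowerSeries (Fin n) K)) {s : ℕ} (g : Fin s → MvPowerSeries (Fin n) K) : Prop :=
  (∀ k, g k ∈ J ∧ g k ≠ 0) ∧
    ∀ f ∈ J, ∀ a i, IsLeadingTerm val r mo f a i →
      ∃ k b j, IsLeadingTerm val r mo (g k) b j ∧ TDiv b j a i

/-- `g` is a Gröbner basis of `J`, as an ideal of `K{X;r}°`. -/
def IsGBInt (val : K → WithTop ℤ) (r : Fin n → ℚ) (mo : (Fin n →₀ ℕ) → (Fin n →₀ ℕ) → Prop)
    (J : Set (MvPowerSeries (Fin n) K)) {s : ℕ} (g : Fin s → MvPowerSeries (Fin n) K) : Prop :=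
  (∀ k, g k ∈ J ∧ g k ≠ 0) ∧
    ∀ f ∈ J, ∀ a i, IsLeadingTerm val r mo f a i →
      ∃ k b j, IsLeadingTerm val r mo (g k) b j ∧ TIntDiv val r b j a i

/-- The set `LT(J)` of leading terms of nonzero elements of `J`. -/
def LTSet (val : K → WithTop ℤ) (r : Fin n → ℚ) (mo : (Fin n →₀ ℕ) → (Fin n →₀ ℕ) → Prop)
    (J : Set (MvPowerSeries (Fin n) K)) : Set (K × (Fin n →₀ ℕ)) :=
  {t | ∃ f ∈ J, IsLeadingTerm val r mo f t.1 t.2}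

/-- Exponents of elements of `LT(J)`: the image of `LT(J)` modulo units of `K`. -/
def LTExpSet (val : K → WithTop ℤ) (r : Fin n → ℚ) (mo : (Fin n →₀ ℕ) → (Fin n →₀ ℕ) → Prop)
    (J : Set (MvPowerSeries (Fin n) K)) : Set (Fin n →₀ ℕ) :=
  {i | ∃ a, (a, i) ∈ LTSet val r mo J}

/-- The skeleton of `LT(J)` (modulo units of `K`): minimal elements for divisibility. -/
def SkelExp (val : K → WithTop ℤ) (r : Fin n → ℚ) (mo : (Fin n →₀ ℕ) → (Fin n →₀ ℕ) → Prop)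
    (J : Set (MvPowerSeries (Fin n) K)) : Set (Fin n →₀ ℕ) :=
  {i | i ∈ LTExpSet val r mo J ∧ ∀ j ∈ LTExpSet val r mo J, (∃ k, i = j + k) → j = i}

/-- The image of `LT(J)` modulo units of `K°`: pairs (exponent, valuation of the term). -/
def LTClassSet (val : K → WithTop ℤ) (r : Fin n → ℚ) (mo : (Fin n →₀ ℕ) → (Fin n →₀ ℕ) → Prop)
    (J : Set (MvPowerSeries (Fin n) K)) : Set ((Fin n →₀ ℕ) × ℚ) :=
  {c | ∃ a, (a, c.1) ∈ LTSet val r mo J ∧ tval val r a c.1 = (c.2 : WithTop ℚ)}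

/-- Divisibility of classes of integral terms modulo units of `K°`. -/
def ClassDiv {n : ℕ} (c d : (Fin n →₀ ℕ) × ℚ) : Prop :=
  (∃ k, d.1 = c.1 + k) ∧ c.2 ≤ d.2

/-- The skeleton of `LT(J)` modulo units of `K°`. -/
def SkelClass (val : K → WithTop ℤ) (r : Fin n → ℚ) (mo : (Fin n →₀ ℕ) → (Fin n →₀ ℕ) → Prop)
    (J : Set (MvPowerSeries (Fin n) K)) : Set ((Fin n →₀ ℕ) × ℚ) :=
  {c | c ∈ LTClassSet val r mo J ∧ ∀ d ∈ LTClassSet val r mo J, ClassDiv d c → d = c}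

/-- Minimal Gröbner basis of an ideal of `K{X;r}`: the classes of the leading terms
modulo units of `K` are pairwise distinct and are exactly the skeleton of `LT(J)`. -/
def IsMinGB (val : K → WithTop ℤ) (r : Fin n → ℚ) (mo : (Fin n →₀ ℕ) → (Fin n →₀ ℕ) → Prop)
    (J : Set (MvPowerSeries (Fin n) K)) {s : ℕ} (g : Fin s → MvPowerSeries (Fin n) K) : Prop :=
  IsGB val r mo J g ∧ ∃ e : Fin s → (Fin n →₀ ℕ),
    (∀ k, ∃ a, IsLeadingTerm val r mo (g k) a (e k)) ∧
    Function.Injective e ∧ Set.range e = SkelExp val r mo J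

/-- Minimal Gröbner basis of an ideal of `K{X;r}°`. -/
def IsMinGBInt (val : K → WithTop ℤ) (r : Fin n → ℚ) (mo : (Fin n →₀ ℕ) → (Fin n →₀ ℕ) → Prop)
    (J : Set (MvPowerSeries (Fin n) K)) {s : ℕ} (g : Fin s → MvPowerSeries (Fin n) K) : Prop :=
  IsGBInt val r mo J g ∧ ∃ e : Fin s → ((Fin n →₀ ℕ) × ℚ),
    (∀ k, ∃ a, IsLeadingTerm val r mo (g k) a (e k).1 ∧
      tval val r a (e k).1 = ((e k).2 : WithTop ℚ)) ∧
    Function.Injective e ∧ Set.range e = SkelClass val r mo J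

/-- The leading term of `f` (via choice). -/
def leadTerm (val : K → WithTop ℤ) (r : Fin n → ℚ) (mo : (Fin n →₀ ℕ) → (Fin n →₀ ℕ) → Prop)
    (f : MvPowerSeries (Fin n) K) : K × (Fin n →₀ ℕ) :=
  Classical.epsilon fun p => IsLeadingTerm val r mo f p.1 p.2

/-- Multiplication of a power series by the term `t`. -/
def termMul (t : K × (Fin n →₀ ℕ)) (f : MvPowerSeries (Fin n) K) : MvPowerSeries (Fin n) K :=
  (MvPowerSeries.monomial t.2 t.1) * f

/-- The S-polynomial `S(f, g) = (LT(g)/gcd(LT f, LT g))·f - (LT(f)/gcd(LT f, LT g))·g`. -/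
def Spoly (val : K → WithTop ℤ) (π : K) (r : Fin n → ℚ)
    (mo : (Fin n →₀ ℕ) → (Fin n →₀ ℕ) → Prop)
    (f g : MvPowerSeries (Fin n) K) : MvPowerSeries (Fin n) K :=
  let a := (leadTerm val r mo f).1
  let i := (leadTerm val r mo f).2
  let b := (leadTerm val r mo g).1
  let j := (leadTerm val r mo g).2
  let m : ℤ := min ((val a).untopD 0) ((val b).untopD 0)
  termMul (b * π ^ (-m), j - i) f - termMul (a * π ^ (-m), i - j) g

/-- `f` reduces to zero modulo the family `g` with quotients in `A`. -/
def ReducesToZero (val : K → WithTop ℤ) (r : Fin n → ℚ)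
    (mo : (Fin n →₀ ℕ) → (Fin n →₀ ℕ) → Prop) (A : Set (MvPowerSeries (Fin n) K))
    {s : ℕ} (g : Fin s → MvPowerSeries (Fin n) K) (f : MvPowerSeries (Fin n) K) : Prop :=
  f = 0 ∨ ∃ q : Fin s → MvPowerSeries (Fin n) K, (∀ k, q k ∈ A) ∧ f = ∑ k, q k * g k ∧
    ∀ k i, MvPowerSeries.coeff i (q k) ≠ 0 →
      ∀ b j, IsLeadingTerm val r mo (g k) b j →
      ∀ a₀ i₀, IsLeadingTerm val r mo f a₀ i₀ →
        TermLe val r mo (MvPowerSeries.coeff i (q k) * b) (i + j) a₀ i₀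

/-!
Among the nonzero terms of a Tate series, `val(a_i) - r·i` attains a minimum, and by the
Tate condition only finitely many exponents attain it; the leading exponent is the largest of
these for the monomial order. Uniqueness holds because the term order is antisymmetric.
-/

lemma Set.Finite.exists_forall_rel_of_total {α : Type*} {rel : α → α → Prop}
    (htrans : ∀ a b c, rel a b → rel b c → rel a c) (htotal : ∀ a b, rel a b ∨ rel b a)
    {s : Set α} (hs : s.Finite) (hne : s.Nonempty) : ∃ b ∈ s, ∀ a ∈ s, rel a b := by
  have := hne.to_subtype
  have := hs.fintype
  have : IsTrans α rel := ⟨htrans⟩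
  have hdir : Directed rel ((↑) : s → α) := fun x y =>
    (htotal x y).elim (fun h => ⟨y, h, (htotal y y).elim id id⟩)
      (fun h => ⟨x, (htotal x x).elim id id, h⟩)
  obtain ⟨b, hb⟩ := hdir.finset_le Finset.univ
  exact ⟨b, b.2, fun a ha => hb ⟨a, ha⟩ (Finset.mem_univ _)⟩

lemma termLt_asymm {K : Type*} {val : K → WithTop ℤ} {r : Fin n → ℚ}
    {mo : (Fin n →₀ ℕ) → (Fin n →₀ ℕ) → Prop} (hanti : ∀ i j, mo i j → mo j i → i = j)
    {a b : K} {i j : Fin n →₀ ℕ} (h : TermLt val r mo a i b j) : ¬ TermLt val r mo b j a i := by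
  rcases h with hlt | ⟨heq, hne, hij⟩ <;> rintro (hlt' | ⟨heq', -, hji⟩)
  · exact lt_asymm hlt hlt'
  · exact hlt.ne heq'
  · exact hlt'.ne heq
  · exact hne (hanti i j hij hji)

lemma cval_ne_top {val : K → WithTop ℤ} (hval : IsCDVField val) (r : Fin n → ℚ)
    {f : MvPowerSeries (Fin n) K} {i : Fin n →₀ ℕ} (hi : coeff i f ≠ 0) :
    cval val r f i ≠ ⊤ := by
  have hval_ne_top : val (coeff i f) ≠ ⊤ := fun h => hi ((hval.eq_top_iff _).mp h)
  simpa [cval, tval, valQ, WithTop.add_eq_top] using hval_ne_top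

namespace IsTate

variable {val : K → WithTop ℤ} {r : Fin n → ℚ} {f : MvPowerSeries (Fin n) K}

lemma finite_setOf_cval_le (hf : IsTate val r f) {v : WithTop ℚ} (hv : v ≠ ⊤) :
    {i | cval val r f i ≤ v}.Finite := by
  lift v to ℚ using hv
  refine (hf (v + 1)).subset fun i hi => ?_
  exact lt_of_le_of_lt hi (WithTop.coe_lt_coe.mpr (lt_add_one v))

lemma exists_forall_cval_le (hval : IsCDVField val) (hf : IsTate val r f) (hf0 : f ≠ 0) :
    ∃ j, coeff j f ≠ 0 ∧ ∀ i, coeff i f ≠ 0 → cval val r f j ≤ cval val r f i := by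
  obtain ⟨j, hj⟩ : ∃ j, coeff j f ≠ 0 := by
    by_contra! h
    exact hf0 (MvPowerSeries.ext fun j => by simpa using h j)
  set S := {i | coeff i f ≠ 0 ∧ cval val r f i ≤ cval val r f j}
  have hS : S.Finite :=
    (hf.finite_setOf_cval_le (cval_ne_top hval r hj)).subset fun i hi => hi.2
  obtain ⟨m, ⟨hm, hmj⟩, hmin⟩ := Set.exists_min_image S (cval val r f) hS ⟨j, hj, le_rfl⟩
  refine ⟨m, hm, fun i hi => ?_⟩
  by_cases hij : cval val r f i ≤ cval val r f j
  · exact hmin i ⟨hi, hij⟩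
  · exact hmj.trans (not_le.mp hij).le

end IsTate

/-- every nonzero Tate series has a unique leading term. -/
theorem statement6 (val : K → WithTop ℤ) (hval : IsCDVField val) (r : Fin n → ℚ)
    (mo : (Fin n →₀ ℕ) → (Fin n →₀ ℕ) → Prop) (hmo : IsMonomialOrder mo)
    (f : MvPowerSeries (Fin n) K) (hf : IsTate val r f) (hf0 : f ≠ 0) :
    ∃! i₀ : Fin n →₀ ℕ, MvPowerSeries.coeff i₀ f ≠ 0 ∧
      ∀ i, MvPowerSeries.coeff i f ≠ 0 → i ≠ i₀ →
        TermLt val r mo (MvPowerSeries.coeff i f) i (MvPowerSeries.coeff i₀ f) i₀ := by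
  obtain ⟨j, hj, hjmin⟩ := hf.exists_forall_cval_le hval hf0
  set T := {i | coeff i f ≠ 0 ∧ cval val r f i = cval val r f j}
  have hT : T.Finite :=
    (hf.finite_setOf_cval_le (cval_ne_top hval r hj)).subset fun i hi => hi.2.le
  obtain ⟨i₀, ⟨hi₀, hi₀j⟩, hmax⟩ := hT.exists_forall_rel_of_total hmo.trans hmo.total ⟨j, hj, rfl⟩
  have hlead : ∀ i, coeff i f ≠ 0 → i ≠ i₀ →
      TermLt val r mo (coeff i f) i (coeff i₀ f) i₀ := by
    intro i hi hne
    rcases (hjmin i hi).lt_or_eq with hlt | heq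
    · exact Or.inl (show cval val r f i₀ < cval val r f i from hi₀j ▸ hlt)
    · exact Or.inr ⟨show cval val r f i = cval val r f i₀ from heq.symm.trans hi₀j.symm, hne,
        hmax i ⟨hi, heq.symm⟩⟩
  refine ⟨i₀, ⟨hi₀, hlead⟩, fun i₁ ⟨hi₁, hi₁lead⟩ => ?_⟩
  by_contra hne
  exact termLt_asymm hmo.antisymm (hi₁lead i₀ hi₀ (Ne.symm hne)) (hlead i₁ hi₁ hne)
end
end

section
/- Let J be an ideal of K{X;r} (resp. of K{X;r}°) and let G be a Gröbner basis of J. Then there exists a subset G' ⊆ G that is a minimal Gröbner basis of J. -/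
open MvPowerSeries

noncomputable section

variable {K : Type*} [Field K] {n : ℕ}

/-!
The exponents of the leading terms of `G` (over `K°`: the exponents together with the
valuations of the leading terms) form a finite set `E`, finite because a series has only one
leading term. `E` lies in `LT(J)` modulo units, and by the Gröbner property every element of
`LT(J)` is divisible by an element of `E`. Hence the minimal elements of `LT(J)` are exactly
the minimal elements of `E`, and keeping one element of `G` for each of them gives a minimal
Gröbner basis.
-/

section Minimal

variable {α : Type*} [PartialOrder α]

theorem minimal_mem_iff_of_subset_of_forall_exists_le {E L : Set α} (hEL : E ⊆ L)
    (hLE : ∀ x ∈ L, ∃ e ∈ E, e ≤ x) {x : α} :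
    Minimal (· ∈ L) x ↔ Minimal (· ∈ E) x := by
  constructor
  · intro hx
    obtain ⟨e, heE, hex⟩ := hLE x hx.prop
    obtain rfl := hx.eq_of_le (hEL heE) hex
    exact hx.mono hEL heE
  · intro hx
    refine ⟨hEL hx.prop, fun y hy hyx => ?_⟩
    obtain ⟨e, heE, hey⟩ := hLE y hy
    obtain rfl := hx.eq_of_le heE (hey.trans hyx)
    exact hey

theorem exists_fin_subfamily_range_eq_minimal {s : ℕ} {P : Fin s → α → Prop}
    (hP : ∀ l, {c | P l c}.Finite) {L : Set α} (hPL : ∀ l c, P l c → c ∈ L)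
    (hLP : ∀ x ∈ L, ∃ l c, P l c ∧ c ≤ x) :
    ∃ (s' : ℕ) (σ : Fin s' → Fin s) (e : Fin s' → α), (∀ k, P (σ k) (e k)) ∧
      Function.Injective e ∧ Set.range e = {c | Minimal (· ∈ L) c} ∧
      ∀ x ∈ L, ∃ k, e k ≤ x := by
  set E := {c | ∃ l, P l c}
  have hE : E.Finite := by
    convert Set.finite_iUnion hP using 1
    ext
    simp [E]
  have hmin : ∀ c, Minimal (· ∈ L) c ↔ Minimal (· ∈ E) c := fun c =>
    minimal_mem_iff_of_subset_of_forall_exists_le (by rintro c ⟨l, hc⟩; exact hPL l c hc)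
      fun x hx => by obtain ⟨l, c, hc, hcx⟩ := hLP x hx; exact ⟨c, ⟨l, hc⟩, hcx⟩
  set M := {c | Minimal (· ∈ E) c}
  obtain ⟨s', e, he⟩ := (hE.subset fun c (hc : c ∈ M) => hc.prop).fin_embedding
  have hσ : ∀ k, ∃ l, P l (e k) := fun k =>
    (show e k ∈ M from he ▸ Set.mem_range_self k).prop
  choose σ hσ using hσ
  refine ⟨s', σ, e, hσ, e.injective, ?_, fun x hx => ?_⟩
  · rw [he]
    ext c
    exact (hmin c).symm
  · obtain ⟨l, c, hc, hcx⟩ := hLP x hx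
    obtain ⟨m, hmc, hm⟩ := hE.exists_le_minimal ⟨l, hc⟩
    obtain ⟨k, rfl⟩ : m ∈ Set.range e := he ▸ hm
    exact ⟨k, hmc.trans hcx⟩

end Minimal

theorem TermLt.asymm {K : Type*} {val : K → WithTop ℤ} {r : Fin n → ℚ}
    {mo : (Fin n →₀ ℕ) → (Fin n →₀ ℕ) → Prop} (hmo : IsMonomialOrder mo) {a b : K}
    {i j : Fin n →₀ ℕ} (h₁ : TermLt val r mo a i b j) (h₂ : TermLt val r mo b j a i) : False := by
  rcases h₁ with h₁ | ⟨e₁, hij, m₁⟩ <;> rcases h₂ with h₂ | ⟨e₂, -, m₂⟩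
  · exact lt_asymm h₁ h₂
  · exact h₁.ne e₂
  · exact h₂.ne e₁
  · exact hij (hmo.antisymm i j m₁ m₂)

theorem wt_add (r : Fin n → ℚ) (i j : Fin n →₀ ℕ) : wt r (i + j) = wt r i + wt r j := by
  simp only [wt, Finsupp.coe_add, Pi.add_apply, Nat.cast_add, mul_add, Finset.sum_add_distrib]

section Valuation

variable {val : K → WithTop ℤ} {r : Fin n → ℚ}

theorem IsLeadingTerm.unique {mo : (Fin n →₀ ℕ) → (Fin n →₀ ℕ) → Prop}
    (hmo : IsMonomialOrder mo) {f : MvPowerSeries (Fin n) K} {a b : K} {i j : Fin n →₀ ℕ}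
    (h₁ : IsLeadingTerm val r mo f a i) (h₂ : IsLeadingTerm val r mo f b j) : a = b ∧ i = j := by
  obtain ⟨rfl, ha, hi⟩ := h₁
  obtain ⟨rfl, hb, hj⟩ := h₂
  by_cases hij : i = j
  · exact ⟨by rw [hij], hij⟩
  · exact (TermLt.asymm hmo (hi j hb (Ne.symm hij)) (hj i ha hij)).elim

theorem tval_ne_top (hval : IsCDVField val) {a : K} (ha : a ≠ 0) (i : Fin n →₀ ℕ) :
    tval val r a i ≠ ⊤ := by
  have : val a ≠ ⊤ := fun h => ha ((hval.eq_top_iff a).1 h)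
  simpa [tval, valQ, WithTop.add_eq_top] using this

theorem exists_tval_eq_coe (hval : IsCDVField val) {a : K} (ha : a ≠ 0) (i : Fin n →₀ ℕ) :
    ∃ v : ℚ, tval val r a i = v :=
  WithTop.ne_top_iff_exists.1 (tval_ne_top hval ha i) |>.imp fun _ h => h.symm

theorem valQ_mul (hval : IsCDVField val) (a b : K) :
    valQ val (a * b) = valQ val a + valQ val b := by
  rw [valQ, hval.map_mul]
  exact WithTop.map_add (Int.castAddHom ℚ) _ _

theorem tval_mul (hval : IsCDVField val) (a b : K) (i j : Fin n →₀ ℕ) :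
    tval val r (a * b) (i + j) = tval val r a i + tval val r b j := by
  rw [tval, tval, tval, valQ_mul hval, wt_add, neg_add, WithTop.coe_add]
  ac_rfl

theorem tIntDiv_iff (hval : IsCDVField val) {a b : K} (ha : a ≠ 0) (hb : b ≠ 0)
    {i j : Fin n →₀ ℕ} :
    TIntDiv val r b j a i ↔ j ≤ i ∧ tval val r b j ≤ tval val r a i := by
  have hsplit : ∀ k, tval val r a (j + k) = tval val r (a * b⁻¹) k + tval val r b j := by
    intro k
    rw [← tval_mul hval, inv_mul_cancel_right₀ hb, add_comm]
  simp only [TIntDiv, ha, hb, ne_eq, not_false_eq_true, true_and]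
  constructor
  · rintro ⟨k, rfl, hk⟩
    refine ⟨le_self_add, ?_⟩
    rw [hsplit]
    exact le_add_of_nonneg_left hk
  · rintro ⟨hji, hle⟩
    obtain ⟨k, rfl⟩ := le_iff_exists_add.1 hji
    refine ⟨k, rfl, ?_⟩
    rw [hsplit] at hle
    exact (WithTop.add_le_add_iff_right (tval_ne_top hval hb j)).1 (by rwa [zero_add])

variable {mo : (Fin n →₀ ℕ) → (Fin n →₀ ℕ) → Prop} {J : Set (MvPowerSeries (Fin n) K)}

theorem skelExp_eq_minimal :
    SkelExp val r mo J = {i | Minimal (· ∈ LTExpSet val r mo J) i} := by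
  ext i
  simp only [SkelExp, minimal_iff, ← le_iff_exists_add]
  exact and_congr_right fun _ => forall₂_congr fun j _ => imp_congr_right fun _ => eq_comm

theorem classDiv_iff_le (c d : (Fin n →₀ ℕ) × ℚ) : ClassDiv c d ↔ c ≤ d := by
  rw [ClassDiv, Prod.le_def, le_iff_exists_add (a := c.1)]

theorem skelClass_eq_minimal :
    SkelClass val r mo J = {c | Minimal (· ∈ LTClassSet val r mo J) c} := by
  ext c
  simp only [SkelClass, minimal_iff, classDiv_iff_le]
  exact and_congr_right fun _ => forall₂_congr fun d _ => imp_congr_right fun _ => eq_comm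

end Valuation

section Subfamily

variable {val : K → WithTop ℤ} {r : Fin n → ℚ} {mo : (Fin n →₀ ℕ) → (Fin n →₀ ℕ) → Prop}
  {J : Set (MvPowerSeries (Fin n) K)} {s : ℕ} {g : Fin s → MvPowerSeries (Fin n) K}

theorem IsGB.exists_subfamily_isMinGB (hmo : IsMonomialOrder mo) (hg : IsGB val r mo J g) :
    ∃ (s' : ℕ) (g' : Fin s' → MvPowerSeries (Fin n) K),
      (∀ k, ∃ l, g' k = g l) ∧ IsMinGB val r mo J g' := by
  obtain ⟨s', σ, e, hσ, he, hrange, hcover⟩ := exists_fin_subfamily_range_eq_minimal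
    (P := fun l i => ∃ a, IsLeadingTerm val r mo (g l) a i) (L := LTExpSet val r mo J)
    (fun l => Set.Subsingleton.finite fun i ⟨_, ha⟩ j ⟨_, hb⟩ => (ha.unique hmo hb).2)
    (fun l i ⟨a, ha⟩ => ⟨a, g l, (hg.1 l).1, ha⟩)
    (fun i ⟨a, f, hf, ha⟩ => by
      obtain ⟨l, b, j, hb, -, -, hji⟩ := hg.2 f hf a i ha
      exact ⟨l, j, ⟨b, hb⟩, le_iff_exists_add.2 hji⟩)
  refine ⟨s', g ∘ σ, fun k => ⟨σ k, rfl⟩, ⟨fun k => hg.1 (σ k), fun f hf a i ha => ?_⟩,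
    e, hσ, he, hrange.trans skelExp_eq_minimal.symm⟩
  obtain ⟨k, hk⟩ := hcover i ⟨a, f, hf, ha⟩
  obtain ⟨b, hb⟩ := hσ k
  exact ⟨k, b, e k, hb, hb.2.1, ha.2.1, le_iff_exists_add.1 hk⟩

theorem IsGBInt.exists_subfamily_isMinGBInt (hval : IsCDVField val)
    (hmo : IsMonomialOrder mo) (hg : IsGBInt val r mo J g) :
    ∃ (s' : ℕ) (g' : Fin s' → MvPowerSeries (Fin n) K),
      (∀ k, ∃ l, g' k = g l) ∧ IsMinGBInt val r mo J g' := by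
  obtain ⟨s', σ, e, hσ, he, hrange, hcover⟩ := exists_fin_subfamily_range_eq_minimal
    (P := fun l c =>
      ∃ a, IsLeadingTerm val r mo (g l) a c.1 ∧ tval val r a c.1 = (c.2 : WithTop ℚ))
    (L := LTClassSet val r mo J)
    (fun l => Set.Subsingleton.finite <| by
      rintro ⟨i, v⟩ ⟨a, ha, hv⟩ ⟨j, w⟩ ⟨b, hb, hw⟩
      obtain ⟨rfl, rfl⟩ := ha.unique hmo hb
      exact Prod.ext rfl (WithTop.coe_injective (hv.symm.trans hw)))
    (by
      rintro l c ⟨a, ha, hc⟩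
      exact ⟨a, ⟨g l, (hg.1 l).1, ha⟩, hc⟩)
    (by
      rintro ⟨i, v⟩ ⟨a, ⟨f, hf, ha⟩, hv⟩
      obtain ⟨l, b, j, hb, hdiv⟩ := hg.2 f hf a i ha
      obtain ⟨w, hw⟩ := exists_tval_eq_coe hval hb.2.1 j
      rw [tIntDiv_iff hval ha.2.1 hb.2.1, hw, hv, WithTop.coe_le_coe] at hdiv
      exact ⟨l, (j, w), ⟨b, hb, hw⟩, Prod.mk_le_mk.2 hdiv⟩)
  refine ⟨s', g ∘ σ, fun k => ⟨σ k, rfl⟩, ⟨fun k => hg.1 (σ k), fun f hf a i ha => ?_⟩,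
    e, hσ, he, hrange.trans skelClass_eq_minimal.symm⟩
  obtain ⟨v, hv⟩ := exists_tval_eq_coe hval ha.2.1 i
  obtain ⟨k, hk⟩ := hcover (i, v) ⟨a, ⟨f, hf, ha⟩, hv⟩
  obtain ⟨b, hb, hbk⟩ := hσ k
  refine ⟨k, b, (e k).1, hb, (tIntDiv_iff hval ha.2.1 hb.2.1).2 ⟨hk.1, ?_⟩⟩
  rw [hbk, hv]
  exact WithTop.coe_le_coe.2 hk.2

end Subfamily

/-- every Gröbner basis of an ideal `J` of `K{X;r}` (resp. of
`K{X;r}°`) contains a subset which is a minimal Gröbner basis of `J`. -/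
theorem statement11 (val : K → WithTop ℤ) (hval : IsCDVField val) (r : Fin n → ℚ)
    (mo : (Fin n →₀ ℕ) → (Fin n →₀ ℕ) → Prop) (hmo : IsMonomialOrder mo) :
    (∀ J : Set (MvPowerSeries (Fin n) K), IsIdealOf (TateSet val r) J →
      ∀ (s : ℕ) (g : Fin s → MvPowerSeries (Fin n) K), IsGB val r mo J g →
        ∃ (s' : ℕ) (g' : Fin s' → MvPowerSeries (Fin n) K),
          (∀ k, ∃ l, g' k = g l) ∧ IsMinGB val r mo J g') ∧
    (∀ J : Set (MvPowerSeries (Fin n) K), IsIdealOf (TateIntSet val r) J →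
      ∀ (s : ℕ) (g : Fin s → MvPowerSeries (Fin n) K), IsGBInt val r mo J g →
        ∃ (s' : ℕ) (g' : Fin s' → MvPowerSeries (Fin n) K),
          (∀ k, ∃ l, g' k = g l) ∧ IsMinGBInt val r mo J g') :=
  ⟨fun _ _ _ _ hg => hg.exists_subfamily_isMinGB hmo,
    fun _ _ _ _ hg => hg.exists_subfamily_isMinGBInt hval hmo⟩
end
end

section
/- Take r = (0,…,0) and write K{X} = K{X;(0,…,0)}, val = val_0. Let J be an ideal of K{X}, set J° = J ∩ K{X}°, and let J̄° be the image of J° in the polynomial ring k̄[X_1,…,X_n] over the residue field k̄ = K°/πK° under reduction of coefficients modulo π. Let g_1,…,g_s ∈ J with val(g_i) = 0 for all i, and let ḡ_1,…,ḡ_s be their images in J̄°. Then the following are equivalent: (1) (g_1,…,g_s) is a Gröbner basis of J; (2) (g_1,…,g_s) is a Gröbner basis of J°; (3) (ḡ_1,…,ḡ_s) is a Gröbner basis of J̄° in k̄[X] with respect to the monomial order ≤ω. -/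
open MvPowerSeries

noncomputable section

variable {K : Type*} [Field K] {n : ℕ}

/-- The leading exponent of the reduction of `f` modulo `π` in `k̄[X]`:
the `mo`-largest exponent whose coefficient has valuation `0`. -/
def ResLeadExp (val : K → WithTop ℤ) (mo : (Fin n →₀ ℕ) → (Fin n →₀ ℕ) → Prop)
    (f : MvPowerSeries (Fin n) K) (i : Fin n →₀ ℕ) : Prop :=
  val (MvPowerSeries.coeff i f) = 0 ∧
    ∀ j, val (MvPowerSeries.coeff j f) = 0 → mo j i

/-- `ḡ` is a Gröbner basis of the image `J̄°` of `J°` in `k̄[X]`: the leading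
monomial of the reduction of every element of `J°` with nonzero reduction is
divisible by the leading monomial of the reduction of some `g_k`. -/
def IsGBRes (val : K → WithTop ℤ) (mo : (Fin n →₀ ℕ) → (Fin n →₀ ℕ) → Prop)
    (J₀ : Set (MvPowerSeries (Fin n) K)) {s : ℕ}
    (g : Fin s → MvPowerSeries (Fin n) K) : Prop :=
  ∀ f ∈ J₀, ∀ i₀, ResLeadExp val mo f i₀ →
    ∃ k j, ResLeadExp val mo (g k) j ∧ ∃ d, i₀ = j + d

/-! With `r = 0` the valuation of a term is that of its coefficient, so the leading coefficient of
`f` has the least valuation among the coefficients of `f`. Multiplying `f ∈ J` by a suitable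
constant makes that coefficient a unit of `K°`; this puts the product in `J°` without changing its
leading exponent. The leading coefficients of the `g_k`, of Gauss valuation `0`, are units of `K°`
as well. Divisibility in `T°` by a unit term is divisibility in `T` plus integrality of the
dividend, and the leading exponent of an integral series whose leading coefficient is a unit is
the `≤ω`-largest exponent of its reduction modulo `π`. -/

section Valuation

variable {R : Type*} {v : R → WithTop ℤ}

lemma valQ_le_valQ_iff {x y : R} : valQ v x ≤ valQ v y ↔ v x ≤ v y :=
  WithTop.map_le_iff _ Int.cast_le

lemma valQ_lt_valQ_iff {x y : R} : valQ v x < valQ v y ↔ v x < v y := by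
  rw [lt_iff_not_ge, lt_iff_not_ge, valQ_le_valQ_iff]

lemma valQ_eq_valQ_iff {x y : R} : valQ v x = valQ v y ↔ v x = v y := by
  rw [le_antisymm_iff, le_antisymm_iff, valQ_le_valQ_iff, valQ_le_valQ_iff]

lemma valQ_nonneg_iff {x : R} : 0 ≤ valQ v x ↔ 0 ≤ v x := by
  rw [valQ]
  cases v x <;> simp

lemma valQ_eq_zero_iff {x : R} : valQ v x = 0 ↔ v x = 0 := by
  rw [valQ]
  cases v x <;> simp

lemma tval_zero (a : R) (i : Fin n →₀ ℕ) : tval v 0 a i = valQ v a := by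
  simp [tval, wt]

lemma nonneg_tval_zero_iff {a : R} {i : Fin n →₀ ℕ} : 0 ≤ tval v 0 a i ↔ 0 ≤ v a := by
  rw [tval_zero, valQ_nonneg_iff]

lemma termLt_zero_iff {mo : (Fin n →₀ ℕ) → (Fin n →₀ ℕ) → Prop} {a b : R}
    {i j : Fin n →₀ ℕ} :
    TermLt v 0 mo a i b j ↔ v b < v a ∨ (v a = v b ∧ i ≠ j ∧ mo i j) := by
  rw [TermLt, tval_zero, tval_zero, valQ_lt_valQ_iff, valQ_eq_valQ_iff]

end Valuation

variable {val : K → WithTop ℤ} {mo : (Fin n →₀ ℕ) → (Fin n →₀ ℕ) → Prop}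

lemma mem_tateIntSet_zero_iff {f : MvPowerSeries (Fin n) K} :
    f ∈ TateIntSet val 0 ↔ IsTate val 0 f ∧ ∀ i, 0 ≤ val (coeff i f) := by
  simp only [TateIntSet, Set.mem_ofPred_eq, cval, nonneg_tval_zero_iff]

lemma gaussValEq_zero_iff {f : MvPowerSeries (Fin n) K} :
    GaussValEq val 0 f 0 ↔ (∀ i, 0 ≤ val (coeff i f)) ∧ ∃ i, val (coeff i f) = 0 := by
  simp only [GaussValEq, cval, WithTop.coe_zero, tval_zero, valQ_nonneg_iff,
    valQ_eq_zero_iff]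

namespace IsCDVField

lemma map_zero (hval : IsCDVField val) : val 0 = ⊤ := (hval.eq_top_iff 0).2 rfl

lemma ne_zero_of_val_eq_zero (hval : IsCDVField val) {x : K} (hx : val x = 0) : x ≠ 0 := by
  rintro rfl
  simp [hval.map_zero] at hx

lemma map_mul_inv_of_val_eq_zero (hval : IsCDVField val) (a : K) {b : K} (hb : val b = 0) :
    val (a * b⁻¹) = val a := by
  have hb_inv : val b⁻¹ = 0 := by
    simpa [hval.map_one, hval.map_mul, hb, mul_inv_cancel₀ (hval.ne_zero_of_val_eq_zero hb)]
      using (hval.map_mul b b⁻¹).symm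
  rw [hval.map_mul, hb_inv, add_zero]

lemma exists_val_mul_eq_zero (hval : IsCDVField val) {a : K} (ha : a ≠ 0) :
    ∃ c, val (c * a) = 0 := by
  obtain ⟨m, hm⟩ := WithTop.ne_top_iff_exists.1 (mt (hval.eq_top_iff a).1 ha)
  obtain ⟨c, hc⟩ := hval.surjective (-m)
  refine ⟨c, ?_⟩
  rw [hval.map_mul, hc, ← hm, ← WithTop.coe_add, neg_add_cancel, WithTop.coe_zero]

lemma isTate_C (hval : IsCDVField val) (r : Fin n → ℚ) (c : K) : IsTate val r (C c) := by
  refine fun _ ↦ (Set.finite_singleton 0).subset fun i hi ↦ ?_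
  by_contra hi0
  rw [Set.mem_singleton_iff] at hi0
  simp [cval, tval, coeff_C, if_neg hi0, valQ, hval.map_zero] at hi

end IsCDVField

lemma ne_zero_of_gaussValEq_zero (hval : IsCDVField val) {f : MvPowerSeries (Fin n) K}
    (hf : GaussValEq val 0 f 0) : f ≠ 0 := by
  obtain ⟨i, hi⟩ := (gaussValEq_zero_iff.1 hf).2
  rintro rfl
  exact hval.ne_zero_of_val_eq_zero hi (map_zero _)

lemma tIntDiv_zero_iff (hval : IsCDVField val) {a b : K} {i j : Fin n →₀ ℕ} (hb : val b = 0) :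
    TIntDiv val 0 b j a i ↔ TDiv b j a i ∧ 0 ≤ val a := by
  simp only [TIntDiv, TDiv, nonneg_tval_zero_iff, hval.map_mul_inv_of_val_eq_zero a hb]
  constructor
  · rintro ⟨hb0, ha0, k, hk, ha⟩
    exact ⟨⟨hb0, ha0, k, hk⟩, ha⟩
  · rintro ⟨⟨hb0, ha0, k, hk⟩, ha⟩
    exact ⟨hb0, ha0, k, hk, ha⟩

namespace IsLeadingTerm

variable {f : MvPowerSeries (Fin n) K} {a : K} {i : Fin n →₀ ℕ}

lemma val_le (hval : IsCDVField val) (h : IsLeadingTerm val 0 mo f a i) (j : Fin n →₀ ℕ) :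
    val a ≤ val (coeff j f) := by
  by_cases hj : coeff j f = 0
  · simp [hj, hval.map_zero]
  obtain rfl | hji := eq_or_ne j i
  · rw [h.1]
  rcases termLt_zero_iff.1 (h.2.2 j hj hji) with hlt | ⟨heq, -⟩
  · exact hlt.le
  · exact heq.ge

lemma val_eq_zero_of_gaussValEq_zero (hval : IsCDVField val)
    (h : IsLeadingTerm val 0 mo f a i) (hf : GaussValEq val 0 f 0) : val a = 0 := by
  obtain ⟨hnonneg, i', hi'⟩ := gaussValEq_zero_iff.1 hf
  exact le_antisymm (hi' ▸ h.val_le hval i') (h.1 ▸ hnonneg i)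

lemma C_mul (hval : IsCDVField val) {c : K} (hc : c ≠ 0) (h : IsLeadingTerm val 0 mo f a i) :
    IsLeadingTerm val 0 mo (C c * f) (c * a) i := by
  refine ⟨by rw [coeff_C_mul, h.1], mul_ne_zero hc h.2.1, fun j hj hji ↦ ?_⟩
  rw [coeff_C_mul] at hj ⊢
  have hct : val c ≠ ⊤ := mt (hval.eq_top_iff c).1 hc
  rw [termLt_zero_iff, hval.map_mul, hval.map_mul]
  rcases termLt_zero_iff.1 (h.2.2 j (right_ne_zero_of_mul hj) hji) with hlt | ⟨heq, hne, hm⟩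
  · exact Or.inl (WithTop.add_lt_add_left hct hlt)
  · exact Or.inr ⟨by rw [heq], hne, hm⟩

lemma resLeadExp (hval : IsCDVField val) (hmo : IsMonomialOrder mo)
    (h : IsLeadingTerm val 0 mo f a i) (ha : val a = 0) : ResLeadExp val mo f i := by
  refine ⟨h.1 ▸ ha, fun j hj ↦ ?_⟩
  obtain rfl | hji := eq_or_ne j i
  · exact hmo.refl j
  rcases termLt_zero_iff.1 (h.2.2 j (hval.ne_zero_of_val_eq_zero hj) hji) with hlt | ⟨-, -, hm⟩
  · rw [ha, hj] at hlt
    exact absurd hlt (lt_irrefl 0)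
  · exact hm

end IsLeadingTerm

lemma isLeadingTerm_of_resLeadExp (hval : IsCDVField val) {f : MvPowerSeries (Fin n) K}
    {i : Fin n →₀ ℕ} (hf : ∀ j, 0 ≤ val (coeff j f)) (h : ResLeadExp val mo f i) :
    IsLeadingTerm val 0 mo f (coeff i f) i := by
  refine ⟨rfl, hval.ne_zero_of_val_eq_zero h.1, fun j _ hji ↦ termLt_zero_iff.2 ?_⟩
  by_cases hj : val (coeff j f) = 0
  · exact Or.inr ⟨hj.trans h.1.symm, hji, h.2 j hj⟩
  · rw [h.1]
    exact Or.inl ((hf j).lt_of_ne (Ne.symm hj))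

lemma exists_C_mul_mem_inter_tateIntSet (hval : IsCDVField val)
    {J : Set (MvPowerSeries (Fin n) K)} (hJ : IsIdealOf (TateSet val 0) J)
    {f : MvPowerSeries (Fin n) K} {a : K} {i : Fin n →₀ ℕ} (hf : f ∈ J)
    (h : IsLeadingTerm val 0 mo f a i) :
    ∃ c, C c * f ∈ J ∩ TateIntSet val 0 ∧ IsLeadingTerm val 0 mo (C c * f) (c * a) i ∧
      val (c * a) = 0 := by
  obtain ⟨c, hca⟩ := hval.exists_val_mul_eq_zero h.2.1
  have hlt := h.C_mul hval (left_ne_zero_of_mul (hval.ne_zero_of_val_eq_zero hca))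
  have hcf : C c * f ∈ J := hJ.smul_mem _ (hval.isTate_C 0 c) f hf
  have hcf_int : ∀ j, 0 ≤ val (coeff j (C c * f)) := fun j ↦ hca ▸ hlt.val_le hval j
  exact ⟨c, ⟨hcf, mem_tateIntSet_zero_iff.2 ⟨hJ.subset hcf, hcf_int⟩⟩, hlt, hca⟩

section GroebnerBasis

variable {J : Set (MvPowerSeries (Fin n) K)} {s : ℕ} {g : Fin s → MvPowerSeries (Fin n) K}

lemma isGBInt_of_isGB (hval : IsCDVField val) (hg : ∀ k, g k ∈ J ∩ TateIntSet val 0)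
    (hg0 : ∀ k, GaussValEq val 0 (g k) 0) (hGB : IsGB val 0 mo J g) :
    IsGBInt val 0 mo (J ∩ TateIntSet val 0) g := by
  refine ⟨fun k ↦ ⟨hg k, (hGB.1 k).2⟩, fun f hf a i hlt ↦ ?_⟩
  obtain ⟨k, b, j, hltg, hdiv⟩ := hGB.2 f hf.1 a i hlt
  have hb := hltg.val_eq_zero_of_gaussValEq_zero hval (hg0 k)
  exact ⟨k, b, j, hltg, (tIntDiv_zero_iff hval hb).2
    ⟨hdiv, hlt.1 ▸ (mem_tateIntSet_zero_iff.1 hf.2).2 i⟩⟩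

lemma isGB_of_isGBInt (hval : IsCDVField val) (hJ : IsIdealOf (TateSet val 0) J)
    (hGB : IsGBInt val 0 mo (J ∩ TateIntSet val 0) g) : IsGB val 0 mo J g := by
  refine ⟨fun k ↦ ⟨(hGB.1 k).1.1, (hGB.1 k).2⟩, fun f hf a i hlt ↦ ?_⟩
  obtain ⟨c, hcf, hclt, -⟩ := exists_C_mul_mem_inter_tateIntSet hval hJ hf hlt
  obtain ⟨k, b, j, hltg, hb, -, d, hd, -⟩ := hGB.2 _ hcf _ i hclt
  exact ⟨k, b, j, hltg, hb, hlt.2.1, d, hd⟩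

lemma isGBRes_of_isGBInt (hval : IsCDVField val) (hmo : IsMonomialOrder mo)
    (hJ : J ⊆ TateIntSet val 0) (hg0 : ∀ k, GaussValEq val 0 (g k) 0)
    (hGB : IsGBInt val 0 mo J g) : IsGBRes val mo J g := by
  intro f hf i hres
  have hlt := isLeadingTerm_of_resLeadExp hval (mem_tateIntSet_zero_iff.1 (hJ hf)).2 hres
  obtain ⟨k, _, j, hltg, -, -, d, hd, -⟩ := hGB.2 f hf _ i hlt
  have hb := hltg.val_eq_zero_of_gaussValEq_zero hval (hg0 k)
  exact ⟨k, j, hltg.resLeadExp hval hmo hb, d, hd⟩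

lemma isGBInt_of_isGBRes (hval : IsCDVField val) (hmo : IsMonomialOrder mo)
    (hJ : IsIdealOf (TateSet val 0) J) (hg : ∀ k, g k ∈ J ∩ TateIntSet val 0)
    (hg0 : ∀ k, GaussValEq val 0 (g k) 0) (hRes : IsGBRes val mo (J ∩ TateIntSet val 0) g) :
    IsGBInt val 0 mo (J ∩ TateIntSet val 0) g := by
  refine ⟨fun k ↦ ⟨hg k, ne_zero_of_gaussValEq_zero hval (hg0 k)⟩,
    fun f hf a i hlt ↦ ?_⟩
  obtain ⟨c, hcf, hclt, hca⟩ := exists_C_mul_mem_inter_tateIntSet hval hJ hf.1 hlt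
  obtain ⟨k, j, hresg, d, hd⟩ := hRes _ hcf i (hclt.resLeadExp hval hmo hca)
  have hltg := isLeadingTerm_of_resLeadExp hval (gaussValEq_zero_iff.1 (hg0 k)).1 hresg
  exact ⟨k, _, j, hltg, (tIntDiv_zero_iff hval hresg.1).2
    ⟨⟨hltg.2.1, hlt.2.1, d, hd⟩, hlt.1 ▸ (mem_tateIntSet_zero_iff.1 hf.2).2 i⟩⟩

end GroebnerBasis

/-- (r = 0) for `g_1, …, g_s ∈ J` with `val(g_i) = 0`, TFAE:
(1) `G` is a GB of `J`; (2) `G` is a GB of `J° = J ∩ K{X}°`;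
(3) the reductions `ḡ_i` form a GB of `J̄°` in `k̄[X]`. -/
theorem statement14 (val : K → WithTop ℤ) (hval : IsCDVField val)
    (mo : (Fin n →₀ ℕ) → (Fin n →₀ ℕ) → Prop) (hmo : IsMonomialOrder mo)
    (J : Set (MvPowerSeries (Fin n) K))
    (hJ : IsIdealOf (TateSet val (0 : Fin n → ℚ)) J)
    (s : ℕ) (g : Fin s → MvPowerSeries (Fin n) K)
    (hgJ : ∀ k, g k ∈ J) (hg0 : ∀ k, GaussValEq val (0 : Fin n → ℚ) (g k) 0) :
    (IsGB val (0 : Fin n → ℚ) mo J g ↔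
      IsGBInt val (0 : Fin n → ℚ) mo (J ∩ TateIntSet val (0 : Fin n → ℚ)) g) ∧
    (IsGBInt val (0 : Fin n → ℚ) mo (J ∩ TateIntSet val (0 : Fin n → ℚ)) g ↔
      IsGBRes val mo (J ∩ TateIntSet val (0 : Fin n → ℚ)) g) := by
  have hg : ∀ k, g k ∈ J ∩ TateIntSet val 0 := fun k ↦
    ⟨hgJ k, mem_tateIntSet_zero_iff.2
      ⟨hJ.subset (hgJ k), (gaussValEq_zero_iff.1 (hg0 k)).1⟩⟩
  exact ⟨⟨isGBInt_of_isGB hval hg hg0, isGB_of_isGBInt hval hJ⟩,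
    ⟨isGBRes_of_isGBInt hval hmo Set.inter_subset_right hg0,
      isGBInt_of_isGBRes hval hmo hJ hg hg0⟩⟩
end
end

section
/- Let J be an ideal of K{X;r} (resp. of K{X;r}°) and let (g_1,…,g_s) be a Gröbner basis of J. Let f ∈ K{X;r} (resp. f ∈ K{X;r}°) and suppose f = q_1 g_1 + ⋯ + q_s g_s + ρ is a decomposition such that no nonzero term of ρ is divisible by any LT(g_i) in T(r) (resp. in T°(r)), and every nonzero term t of each q_i satisfies t·LT(g_i) ≤ LT(f). Then ρ = 0 if and only if f ∈ J. -/
/-! If `f ∈ J`, then `ρ = f - ∑ q_k g_k` lies in `J` as well. A nonzero Tate series has a leading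
term, because its Gauss valuation is attained, and only on finitely many exponents; so if `ρ ≠ 0`,
the Gröbner basis property makes `LT(ρ)` divisible by some `LT(g_k)`, which the hypothesis on the
terms of `ρ` forbids. -/

open MvPowerSeries

noncomputable section

variable {K : Type*} [Field K] {n : ℕ}

theorem Finset.exists_forall_rel_of_trans_of_total {α : Type*} (R : α → α → Prop)
    (htrans : ∀ i j k, R i j → R j k → R i k) (htotal : ∀ i j, R i j ∨ R j i)
    {s : Finset α} (hs : s.Nonempty) : ∃ i ∈ s, ∀ j ∈ s, R j i := by
  induction hs using Finset.Nonempty.cons_induction with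
  | singleton a =>
    exact ⟨a, mem_singleton_self a, fun j hj => by
      rw [mem_singleton.1 hj]; exact (htotal a a).elim id id⟩
  | cons a s _ _ ih =>
    obtain ⟨i, hi, hmax⟩ := ih
    rcases htotal a i with hai | hia
    · refine ⟨i, mem_cons_of_mem hi, fun j hj => ?_⟩
      rcases mem_cons.1 hj with rfl | hj
      exacts [hai, hmax j hj]
    · refine ⟨a, mem_cons_self a s, fun j hj => ?_⟩
      rcases mem_cons.1 hj with rfl | hj
      exacts [(htotal j j).elim id id, htrans j i a (hmax j hj) hia]

section TateSeries

variable {val : K → WithTop ℤ} {r : Fin n → ℚ} {f : MvPowerSeries (Fin n) K}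

theorem cval_eq_top_iff (hval : IsCDVField val) (i : Fin n →₀ ℕ) :
    cval val r f i = ⊤ ↔ MvPowerSeries.coeff i f = 0 := by
  simp [cval, tval, valQ, hval.eq_top_iff]

theorem IsTate.exists_gaussValEq (hval : IsCDVField val) (hf : IsTate val r f) (hne : f ≠ 0) :
    ∃ c : ℚ, GaussValEq val r f c := by
  obtain ⟨i₀, hi₀⟩ := (MvPowerSeries.ne_zero_iff_exists_coeff_ne_zero f).1 hne
  obtain ⟨c₀, hc₀⟩ := WithTop.ne_top_iff_exists.1 (mt (cval_eq_top_iff hval i₀).1 hi₀)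
  have hc₀_lt : cval val r f i₀ < ((c₀ + 1 : ℚ) : WithTop ℚ) := by
    rw [← hc₀]; exact_mod_cast lt_add_one c₀
  set F := (hf (c₀ + 1)).toFinset
  obtain ⟨i, -, hmin⟩ := F.exists_min_image (cval val r f) ⟨i₀, by simpa [F] using hc₀_lt⟩
  have hi_lt : cval val r f i < ((c₀ + 1 : ℚ) : WithTop ℚ) :=
    (hmin i₀ (by simpa [F] using hc₀_lt)).trans_lt hc₀_lt
  obtain ⟨c, hc⟩ := WithTop.ne_top_iff_exists.1 hi_lt.ne_top
  refine ⟨c, fun j => ?_, i, hc.symm⟩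
  by_cases hj : j ∈ F
  · exact hc ▸ hmin j hj
  · exact hc ▸ hi_lt.le.trans (not_lt.1 (by simpa [F] using hj))

/-- The leading term is the `mo`-largest among the finitely many terms of minimal valuation. -/
theorem IsTate.exists_isLeadingTerm (hval : IsCDVField val)
    {mo : (Fin n →₀ ℕ) → (Fin n →₀ ℕ) → Prop} (hmo : IsMonomialOrder mo)
    (hf : IsTate val r f) (hne : f ≠ 0) : ∃ a i, IsLeadingTerm val r mo f a i := by
  classical
  obtain ⟨c, hle, i, hi⟩ := hf.exists_gaussValEq hval hne
  have hfin : {j | cval val r f j = c}.Finite :=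
    (hf (c + 1)).subset fun j (hj : cval val r f j = c) => by
      rw [Set.mem_ofPred_eq, hj]; exact_mod_cast lt_add_one c
  obtain ⟨i₁, hi₁, hmax⟩ := Finset.exists_forall_rel_of_trans_of_total mo hmo.trans hmo.total
    (s := hfin.toFinset) ⟨i, by simpa using hi⟩
  rw [Set.Finite.mem_toFinset, Set.mem_ofPred_eq] at hi₁
  refine ⟨_, i₁, rfl, fun h => WithTop.coe_ne_top (hi₁ ▸ (cval_eq_top_iff hval i₁).2 h),
    fun j _ hji => ?_⟩
  rcases (hle j).lt_or_eq with hlt | heq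
  · exact Or.inl (show cval val r f i₁ < cval val r f j by rwa [hi₁])
  · exact Or.inr ⟨heq.symm.trans hi₁.symm, hji, hmax j (by simpa using heq.symm)⟩

end TateSeries

section Division

variable {A J : Set (MvPowerSeries (Fin n) K)} {s : ℕ} {g q : Fin s → MvPowerSeries (Fin n) K}

theorem IsIdealOf.sum_mul_mem (hJ : IsIdealOf A J) (hq : ∀ k, q k ∈ A) (hg : ∀ k, g k ∈ J) :
    ∑ k, q k * g k ∈ J :=
  Finset.sum_induction _ (· ∈ J) (fun _ _ ha hb => hJ.add_mem _ ha _ hb) hJ.zero_mem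
    fun k _ => hJ.smul_mem _ (hq k) _ (hg k)

theorem IsIdealOf.eq_zero_iff_mem_of_eq_sum_add (hJ : IsIdealOf A J) (hq : ∀ k, q k ∈ A)
    (hg : ∀ k, g k ∈ J) {f ρ : MvPowerSeries (Fin n) K} (hf : f = ∑ k, q k * g k + ρ)
    (hρ : ρ ∈ J → ρ = 0) : ρ = 0 ↔ f ∈ J := by
  have hsum := hJ.sum_mul_mem hq hg
  refine ⟨fun h => by rwa [hf, h, add_zero], fun hfJ => hρ ?_⟩
  have : ρ = f + -∑ k, q k * g k := by rw [hf]; ring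
  exact this ▸ hJ.add_mem _ hfJ _ (hJ.neg_mem _ hsum)

/-- `D` stands for divisibility of terms in `T(r)` or in `T°(r)`. -/
theorem eq_zero_of_mem_of_forall_not_dvd {val : K → WithTop ℤ} (hval : IsCDVField val) {r : Fin n → ℚ}
    {mo : (Fin n →₀ ℕ) → (Fin n →₀ ℕ) → Prop} (hmo : IsMonomialOrder mo)
    (D : K → (Fin n →₀ ℕ) → K → (Fin n →₀ ℕ) → Prop)
    (hGB : ∀ f ∈ J, ∀ a i, IsLeadingTerm val r mo f a i →
      ∃ k b j, IsLeadingTerm val r mo (g k) b j ∧ D b j a i)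
    {ρ : MvPowerSeries (Fin n) K} (hρT : IsTate val r ρ) (hρJ : ρ ∈ J)
    (hρ : ∀ k i, MvPowerSeries.coeff i ρ ≠ 0 → ∀ b j, IsLeadingTerm val r mo (g k) b j →
      ¬ D b j (MvPowerSeries.coeff i ρ) i) :
    ρ = 0 := by
  by_contra hne
  obtain ⟨a, i, hlt⟩ := hρT.exists_isLeadingTerm hval hmo hne
  obtain ⟨k, b, j, hltg, hd⟩ := hGB ρ hρJ a i hlt
  exact hρ k i (hlt.1 ▸ hlt.2.1) b j hltg (hlt.1 ▸ hd)

end Division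

/-- if `(g_1, …, g_s)` is a Gröbner basis of `J` and
`f = q_1·g_1 + ⋯ + q_s·g_s + ρ` is a division satisfying the conditions of the
division proposition, then `ρ = 0` iff `f ∈ J`. -/
theorem statement16 (val : K → WithTop ℤ) (hval : IsCDVField val) (r : Fin n → ℚ)
    (mo : (Fin n →₀ ℕ) → (Fin n →₀ ℕ) → Prop) (hmo : IsMonomialOrder mo) :
    (∀ J : Set (MvPowerSeries (Fin n) K), IsIdealOf (TateSet val r) J →
      ∀ (s : ℕ) (g : Fin s → MvPowerSeries (Fin n) K), IsGB val r mo J g →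
      ∀ f, IsTate val r f →
      ∀ (q : Fin s → MvPowerSeries (Fin n) K) (ρ : MvPowerSeries (Fin n) K),
        (∀ k, q k ∈ TateSet val r) → IsTate val r ρ →
        f = (∑ k, q k * g k) + ρ →
        (∀ k i, MvPowerSeries.coeff i ρ ≠ 0 →
          ∀ b j, IsLeadingTerm val r mo (g k) b j →
            ¬ TDiv b j (MvPowerSeries.coeff i ρ) i) →
        (∀ k i, MvPowerSeries.coeff i (q k) ≠ 0 →
          ∀ b j, IsLeadingTerm val r mo (g k) b j →
          ∀ a₀ i₀, IsLeadingTerm val r mo f a₀ i₀ →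
            TermLe val r mo (MvPowerSeries.coeff i (q k) * b) (i + j) a₀ i₀) →
        (ρ = 0 ↔ f ∈ J)) ∧
    (∀ J : Set (MvPowerSeries (Fin n) K), IsIdealOf (TateIntSet val r) J →
      ∀ (s : ℕ) (g : Fin s → MvPowerSeries (Fin n) K), IsGBInt val r mo J g →
      ∀ f, f ∈ TateIntSet val r →
      ∀ (q : Fin s → MvPowerSeries (Fin n) K) (ρ : MvPowerSeries (Fin n) K),
        (∀ k, q k ∈ TateIntSet val r) → IsTate val r ρ →
        f = (∑ k, q k * g k) + ρ →
        (∀ k i, MvPowerSeries.coeff i ρ ≠ 0 →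
          ∀ b j, IsLeadingTerm val r mo (g k) b j →
            ¬ TIntDiv val r b j (MvPowerSeries.coeff i ρ) i) →
        (∀ k i, MvPowerSeries.coeff i (q k) ≠ 0 →
          ∀ b j, IsLeadingTerm val r mo (g k) b j →
          ∀ a₀ i₀, IsLeadingTerm val r mo f a₀ i₀ →
            TermLe val r mo (MvPowerSeries.coeff i (q k) * b) (i + j) a₀ i₀) →
        (ρ = 0 ↔ f ∈ J)) := by
  refine ⟨fun J hJ s g hGB f _ q ρ hq hρT hf hρ _ => ?_,
    fun J hJ s g hGB f _ q ρ hq hρT hf hρ _ => ?_⟩ <;>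
  exact hJ.eq_zero_iff_mem_of_eq_sum_add hq (fun k => (hGB.1 k).1) hf
    fun hρJ => eq_zero_of_mem_of_forall_not_dvd hval hmo _ hGB.2 hρT hρJ hρ
end
end
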